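/- Let α_j ∈ R_+ be a simple root, i.e. (1/2)α_j ∉ R and s_j := s_{α_j} maps R_+ \ {α_j, 2α_j} bijectively onto itself, and set k_j = k_{α_j} + 2k_{2α_j} with k_{2α_j} := 0 if 2α_j ∉ R. Let λ ∈ 𝔞_ℂ with ⟨λ, α_j^∨⟩ ≠ 0, and suppose f : 𝔞 → ℂ is continuously differentiable and satisfies D_ξ(R_+,k) f(x) = ⟨λ, ξ⟩ f(x) for all ξ ∈ 𝔞 and all regular x. Then the function g := f ∘ s_j + (k_j / ⟨λ, α_j^∨⟩) f satisfies D_ξ(R_+,k) g(x) = ⟨s_j λ, ξ⟩ g(x) for all ξ ∈ 𝔞 and all regular x, where s_j λ = λ − ⟨λ, α_j^∨⟩ α_j. -/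

import Mathlib

open scoped BigOperators RealInnerProductSpace
open Finset

variable {𝔞 : Type*} [NormedAddCommGroup 𝔞] [InnerProductSpace ℝ 𝔞] [FiniteDimensional ℝ 𝔞]

/-- The reflection `s_α x = x − ⟨α^∨, x⟩ α`. -/
noncomputable def sRefl (α x : 𝔞) : 𝔞 := x - (2 * ⟪α, x⟫ / ⟪α, α⟫) • α

/-- An integral root system. -/
def IsIntegralRootSystem (R : Finset 𝔞) : Prop :=
  (0 : 𝔞) ∉ R ∧
  (∀ α ∈ R, ∀ β ∈ R, ∃ z : ℤ, 2 * ⟪α, β⟫ / ⟪α, α⟫ = (z : ℝ)) ∧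
  (∀ α ∈ R, ∀ β ∈ R, sRefl α β ∈ R)

/-- A positive system of the root system `R`. -/
def IsPositiveSystem (R Rp : Finset 𝔞) : Prop :=
  ∃ v : 𝔞, (∀ α ∈ R, ⟪α, v⟫ ≠ 0) ∧ ∀ α : 𝔞, α ∈ Rp ↔ α ∈ R ∧ 0 < ⟪α, v⟫

/-- `ρ(R_+, k) = (1/2) ∑_{α ∈ R_+} k_α α`. -/
noncomputable def rho (Rp : Finset 𝔞) (k : 𝔞 → ℝ) : 𝔞 := (1/2 : ℝ) • ∑ α ∈ Rp, k α • α

/-- A regular point. -/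
def IsRegularPt (R : Finset 𝔞) (x : 𝔞) : Prop := ∀ α ∈ R, ⟪α, x⟫ ≠ 0

/-- The Cherednik operator `D_ξ(R_+,k)` applied pointwise. -/
noncomputable def cherednik (Rp : Finset 𝔞) (k : 𝔞 → ℝ) (ξ : 𝔞) (f : 𝔞 → ℂ) (x : 𝔞) : ℂ :=
  fderiv ℝ f x ξ - (⟪rho Rp k, ξ⟫ : ℂ) * f x
    + ∑ α ∈ Rp, ((k α * ⟪α, ξ⟫ : ℝ) : ℂ) * (f x - f (sRefl α x))
        / (1 - Complex.exp (-(⟪α, x⟫ : ℝ) : ℂ))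

/-- Orthogonal projection onto the span of a finite set. -/
noncomputable def projSpan (S : Finset 𝔞) (x : 𝔞) : 𝔞 :=
  (Submodule.orthogonalProjectionOnto (Submodule.span ℝ (S : Set 𝔞)) x : 𝔞)

/-- Orthogonal projection onto the orthogonal complement of the span of a finite set. -/
noncomputable def projPerp (S : Finset 𝔞) (x : 𝔞) : 𝔞 :=
  (Submodule.orthogonalProjectionOnto (Submodule.span ℝ (S : Set 𝔞))ᗮ x : 𝔞)

/-- The ℂ-bilinear pairing `⟨λ, ξ⟩` of `λ = λre + i·λim ∈ 𝔞_ℂ` with `ξ ∈ 𝔞`. -/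
noncomputable def pairC (lamRe lamIm ξ : 𝔞) : ℂ :=
  (⟪lamRe, ξ⟫ : ℂ) + Complex.I * (⟪lamIm, ξ⟫ : ℂ)

/-- The coroot `α^∨ = 2α/⟨α,α⟩`. -/
noncomputable def coroot (α : 𝔞) : 𝔞 := (2 / ⟪α, α⟫) • α


set_option linter.unusedSectionVars false

noncomputable def sReflL (α : 𝔞) : 𝔞 →L[ℝ] 𝔞 :=
  ContinuousLinearMap.id ℝ 𝔞 - ((2 / ⟪α, α⟫) • (innerSL ℝ α)).smulRight α

lemma sReflL_apply (α x : 𝔞) : sReflL α x = sRefl α x := by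
  simp [sReflL, sRefl]
  congr 1
  ring

lemma inner_sRefl_left (α u v : 𝔞) : ⟪sRefl α u, v⟫ = ⟪u, sRefl α v⟫ := by
  simp only [sRefl, inner_sub_left, inner_sub_right, real_inner_smul_left, real_inner_smul_right]
  rw [real_inner_comm α u, real_inner_comm u α]
  ring

lemma sRefl_sRefl {α : 𝔞} (hα : α ≠ 0) (x : 𝔞) : sRefl α (sRefl α x) = x := by
  have hq : ⟪α, α⟫ ≠ 0 := inner_self_ne_zero.2 hα
  simp only [sRefl, inner_sub_right, real_inner_smul_right]
  rw [sub_sub, ← add_smul]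
  have : (2 * ⟪α, x⟫ / ⟪α, α⟫ + 2 * (⟪α, x⟫ - 2 * ⟪α, x⟫ / ⟪α, α⟫ * ⟪α, α⟫) / ⟪α, α⟫) = 0 := by
    field_simp
    ring
  rw [this, zero_smul, sub_zero]

set_option linter.unusedSectionVars false

lemma inner_sRefl_sRefl {α : 𝔞} (hα : α ≠ 0) (u v : 𝔞) : ⟪sRefl α u, sRefl α v⟫ = ⟪u, v⟫ := by
  rw [inner_sRefl_left, sRefl_sRefl hα]

lemma sRefl_inj {α : 𝔞} (hα : α ≠ 0) : Function.Injective (sRefl α) :=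
  Function.LeftInverse.injective (g := sRefl α) (sRefl_sRefl hα)

lemma sRefl_smul_left {c : ℝ} (hc : c ≠ 0) (α x : 𝔞) (hα : α ≠ 0) :
    sRefl (c • α) x = sRefl α x := by
  have hq : ⟪α, α⟫ ≠ 0 := inner_self_ne_zero.2 hα
  simp only [sRefl, real_inner_smul_left, real_inner_smul_right, smul_smul]
  match_scalars
  · ring
  · field_simp

lemma sRefl_sub_smul (α u v : 𝔞) (c : ℝ) :
    sRefl α (u - c • v) = sRefl α u - c • sRefl α v := by
  rw [← sReflL_apply, map_sub, map_smul, sReflL_apply, sReflL_apply]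

lemma sRefl_conj {α : 𝔞} (hα : α ≠ 0) (β x : 𝔞) :
    sRefl α (sRefl β x) = sRefl (sRefl α β) (sRefl α x) := by
  have h1 : sRefl α (sRefl β x) = sRefl α x - (2 * ⟪β, x⟫ / ⟪β, β⟫) • sRefl α β := by
    rw [show sRefl β x = x - (2 * ⟪β, x⟫ / ⟪β, β⟫) • β from rfl, sRefl_sub_smul]
  rw [h1]
  conv_rhs => rw [sRefl]
  rw [inner_sRefl_sRefl hα, inner_sRefl_sRefl hα]

lemma fderiv_comp_sRefl (f : 𝔞 → ℂ) (hf : Differentiable ℝ f) (α x ξ : 𝔞) :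
    fderiv ℝ (fun y => f (sRefl α y)) x ξ = fderiv ℝ f (sRefl α x) (sRefl α ξ) := by
  have h1 : (fun y => f (sRefl α y)) = f ∘ (sReflL α) := by
    funext y; simp [sReflL_apply]
  rw [h1, fderiv_comp (x := x) (by simpa [sReflL_apply] using hf (sRefl α x)) (sReflL α).differentiableAt,
    (sReflL α).fderiv]
  simp [sReflL_apply]

lemma exp_ne_one_of_ne_zero {t : ℝ} (ht : t ≠ 0) : Complex.exp (t : ℂ) ≠ 1 := by
  intro h
  have : ‖Complex.exp (t : ℂ)‖ = 1 := by rw [h]; simp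
  rw [Complex.norm_exp] at this
  simp at this
  exact ht (by simpa using Real.exp_injective (by simpa [Real.exp_zero] using this))

lemma one_sub_exp_ne_zero {t : ℝ} (ht : t ≠ 0) : (1 : ℂ) - Complex.exp (t : ℂ) ≠ 0 :=
  sub_ne_zero.2 (Ne.symm (exp_ne_one_of_ne_zero ht))

lemma exp_frac_identity {t : ℝ} (ht : t ≠ 0) (A : ℂ) :
    A / (1 - Complex.exp (-(t : ℂ))) = A - A / (1 - Complex.exp ((t : ℂ))) := by
  have h1 : (1 : ℂ) - Complex.exp (t : ℂ) ≠ 0 := one_sub_exp_ne_zero ht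
  have h2 : (1 : ℂ) - Complex.exp (-(t : ℂ)) ≠ 0 := by
    have := one_sub_exp_ne_zero (neg_ne_zero.2 ht)
    simpa using this
  rw [Complex.exp_neg] at h2 ⊢
  have h0 : Complex.exp (t : ℂ) ≠ 0 := Complex.exp_ne_zero _
  have h3 : (-1 : ℂ) + Complex.exp (t : ℂ) ≠ 0 := by
    intro h; apply h1; linear_combination -h
  field_simp
  rw [div_eq_iff (by intro h; apply h1; linear_combination -h : Complex.exp (t:ℂ) - 1 ≠ 0)]
  ring

lemma pairC_sRefl (lamRe lamIm α ξ : 𝔞) :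
    pairC lamRe lamIm (sRefl α ξ)
      = pairC lamRe lamIm ξ - pairC lamRe lamIm (coroot α) * (⟪α, ξ⟫ : ℂ) := by
  simp only [pairC, sRefl, coroot, inner_sub_right, real_inner_smul_right]
  push_cast
  ring

lemma cherednik_add_mul (Rp : Finset 𝔞) (k : 𝔞 → ℝ) (ξ : 𝔞) (g h : 𝔞 → ℂ) (c : ℂ) (x : 𝔞)
    (hg : DifferentiableAt ℝ g x) (hh : DifferentiableAt ℝ h x) :
    cherednik Rp k ξ (fun y => g y + c * h y) x
      = cherednik Rp k ξ g x + c * cherednik Rp k ξ h x := by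
  unfold cherednik
  have hd : fderiv ℝ (fun y => g y + c * h y) x ξ = fderiv ℝ g x ξ + c * fderiv ℝ h x ξ := by
    rw [fderiv_fun_add hg (hh.const_mul c), fderiv_const_mul hh c]
    simp
  rw [hd]
  rw [show ∑ α ∈ Rp, ((k α * ⟪α, ξ⟫ : ℝ) : ℂ) * ((g x + c * h x) - (g (sRefl α x) + c * h (sRefl α x)))
        / (1 - Complex.exp (-(⟪α, x⟫ : ℝ) : ℂ))
      = ∑ α ∈ Rp, (((k α * ⟪α, ξ⟫ : ℝ) : ℂ) * (g x - g (sRefl α x))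
          / (1 - Complex.exp (-(⟪α, x⟫ : ℝ) : ℂ))
        + c * (((k α * ⟪α, ξ⟫ : ℝ) : ℂ) * (h x - h (sRefl α x))
          / (1 - Complex.exp (-(⟪α, x⟫ : ℝ) : ℂ)))) from Finset.sum_congr rfl (fun α _ => by ring)]
  rw [Finset.sum_add_distrib, ← Finset.mul_sum]
  ring

lemma two_smul_ne_self {αj : 𝔞} (hne : αj ≠ 0) : (2:ℝ) • αj ≠ αj := by
  intro h
  apply hne
  have h1 : ((2:ℝ) - 1) • αj = 0 := by rw [sub_smul, h]; simp
  rw [show (2:ℝ) - 1 = 1 by norm_num, one_smul] at h1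
  exact h1

lemma sum_Rp_split [DecidableEq 𝔞] {M : Type*} [AddCommGroup M] (Rp : Finset 𝔞) (αj : 𝔞)
    (hαj : αj ∈ Rp) (hne : αj ≠ 0) (F : 𝔞 → M) :
    ∑ α ∈ Rp, F α
      = F αj + (if (2:ℝ) • αj ∈ Rp then F ((2:ℝ) • αj) else 0)
        + ∑ α ∈ (Rp.erase αj).erase ((2:ℝ) • αj), F α := by
  by_cases hm : (2:ℝ) • αj ∈ Rp
  · rw [if_pos hm]
    have hm' : (2:ℝ) • αj ∈ Rp.erase αj := Finset.mem_erase.2 ⟨two_smul_ne_self hne, hm⟩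
    rw [← Finset.add_sum_erase _ F hαj, ← Finset.add_sum_erase _ F hm']
    abel
  · rw [if_neg hm, Finset.erase_eq_of_notMem (fun h => hm (Finset.mem_erase.1 h).2)]
    rw [← Finset.add_sum_erase _ F hαj]
    abel

lemma sum_reindex [DecidableEq 𝔞] {M : Type*} [AddCommMonoid M] {E : Finset 𝔞} {αj : 𝔞}
    (hne : αj ≠ 0) (hE : E.image (sRefl αj) = E) (F : 𝔞 → M) :
    ∑ α ∈ E, F α = ∑ α ∈ E, F (sRefl αj α) := by
  conv_lhs => rw [← hE]
  rw [Finset.sum_image (fun a _ b _ h => sRefl_inj hne h)]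

lemma sRefl_self {α : 𝔞} (hα : α ≠ 0) : sRefl α α = -α := by
  have hq : ⟪α, α⟫ ≠ 0 := inner_self_ne_zero.2 hα
  rw [sRefl, mul_div_assoc, div_self hq, mul_one, two_smul]
  abel

lemma sRefl_smul_right (α : 𝔞) (c : ℝ) (β : 𝔞) : sRefl α (c • β) = c • sRefl α β := by
  rw [← sReflL_apply, map_smul, sReflL_apply]

section Main
variable [DecidableEq 𝔞] {R Rp : Finset 𝔞} {v : 𝔞} {k : 𝔞 → ℝ} {αj : 𝔞}

lemma rho_inner_sRefl
    (hR0 : (0:𝔞) ∉ R)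
    (hv : ∀ α : 𝔞, α ∈ Rp ↔ α ∈ R ∧ 0 < ⟪α, v⟫)
    (hk : ∀ α ∈ R, ∀ β ∈ R, k (sRefl α β) = k β)
    (hαj : αj ∈ Rp)
    (hsimple : ((Rp.erase αj).erase ((2:ℝ) • αj)).image (sRefl αj)
      = (Rp.erase αj).erase ((2:ℝ) • αj))
    (ξ : 𝔞) :
    ⟪rho Rp k, sRefl αj ξ⟫ = ⟪rho Rp k, ξ⟫
      - (k αj + 2 * (if (2:ℝ) • αj ∈ R then k ((2:ℝ) • αj) else 0)) * ⟪αj, ξ⟫ := by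
  have hαjR : αj ∈ R := ((hv αj).1 hαj).1
  have hne : αj ≠ 0 := fun h => hR0 (h ▸ hαjR)
  have h2iff : ((2:ℝ) • αj ∈ Rp) ↔ ((2:ℝ) • αj ∈ R) := by
    constructor
    · exact fun h => ((hv _).1 h).1
    · intro h
      exact (hv _).2 ⟨h, by
        rw [real_inner_smul_left]
        have := ((hv αj).1 hαj).2
        positivity⟩
  have key : ∀ η : 𝔞, ⟪rho Rp k, η⟫ = (1/2 : ℝ) * ∑ α ∈ Rp, k α * ⟪α, η⟫ := by
    intro η
    rw [rho, real_inner_smul_left, sum_inner]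
    congr 1
    exact Finset.sum_congr rfl (fun α _ => real_inner_smul_left _ _ _)
  rw [key, key]
  have e1 : ∑ α ∈ Rp, k α * ⟪α, sRefl αj ξ⟫ = ∑ α ∈ Rp, k α * ⟪sRefl αj α, ξ⟫ :=
    Finset.sum_congr rfl (fun α _ => by rw [inner_sRefl_left])
  rw [e1]
  rw [sum_Rp_split Rp αj hαj hne (fun α => k α * ⟪sRefl αj α, ξ⟫),
      sum_Rp_split Rp αj hαj hne (fun α => k α * ⟪α, ξ⟫)]
  rw [sum_reindex hne hsimple (F := fun α => k α * ⟪sRefl αj α, ξ⟫)]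
  have hEsub : ∀ α ∈ (Rp.erase αj).erase ((2:ℝ) • αj), α ∈ R := fun α hα =>
    ((hv α).1 (Finset.mem_erase.1 (Finset.mem_erase.1 hα).2).2).1
  have e2 : ∑ α ∈ (Rp.erase αj).erase ((2:ℝ) • αj), k (sRefl αj α) * ⟪sRefl αj (sRefl αj α), ξ⟫
      = ∑ α ∈ (Rp.erase αj).erase ((2:ℝ) • αj), k α * ⟪α, ξ⟫ :=
    Finset.sum_congr rfl (fun α hα => by rw [hk αj hαjR α (hEsub α hα), sRefl_sRefl hne])
  rw [e2, sRefl_self hne, sRefl_smul_right, sRefl_self hne]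
  simp only [h2iff]
  by_cases hm : (2:ℝ) • αj ∈ R
  · rw [if_pos hm, if_pos hm, if_pos hm]
    simp only [inner_neg_left, real_inner_smul_left, smul_neg, inner_neg_left,
      real_inner_smul_left]
    ring
  · rw [if_neg hm, if_neg hm, if_neg hm]
    simp only [inner_neg_left]
    ring

lemma exp_frac_identity' {t : ℝ} (ht : t ≠ 0) (A : ℂ) :
    A / (1 - Complex.exp (-(t:ℝ) : ℂ)) = (-A) / (1 - Complex.exp (-((-t:ℝ) : ℝ) : ℂ)) + A := by
  have e1 : ((-(t:ℝ) : ℝ) : ℂ) = -(t:ℂ) := by push_cast; ring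
  have e2 : ((-((-t:ℝ):ℝ) : ℝ) : ℂ) = (t:ℂ) := by push_cast; ring
  rw [show (-(t:ℝ) : ℂ) = -(t:ℂ) by push_cast; ring]
  rw [show (-((-t:ℝ):ℝ) : ℂ) = (t:ℂ) by push_cast; ring]
  rw [exp_frac_identity ht A, neg_div]
  ring

lemma sum_cherednik_sRefl
    (hR0 : (0:𝔞) ∉ R)
    (hv : ∀ α : 𝔞, α ∈ Rp ↔ α ∈ R ∧ 0 < ⟪α, v⟫)
    (hk : ∀ α ∈ R, ∀ β ∈ R, k (sRefl α β) = k β)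
    (hαj : αj ∈ Rp)
    (hsimple : ((Rp.erase αj).erase ((2:ℝ) • αj)).image (sRefl αj)
      = (Rp.erase αj).erase ((2:ℝ) • αj))
    (f : 𝔞 → ℂ) (ξ x : 𝔞) (hx : IsRegularPt R x) :
    ∑ α ∈ Rp, ((k α * ⟪α, ξ⟫ : ℝ) : ℂ) * (f (sRefl αj x) - f (sRefl αj (sRefl α x)))
        / (1 - Complex.exp (-(⟪α, x⟫ : ℝ) : ℂ))
      = (∑ α ∈ Rp, ((k α * ⟪α, sRefl αj ξ⟫ : ℝ) : ℂ)
            * (f (sRefl αj x) - f (sRefl α (sRefl αj x)))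
          / (1 - Complex.exp (-(⟪α, sRefl αj x⟫ : ℝ) : ℂ)))
        + ((k αj + 2 * (if (2:ℝ) • αj ∈ R then k ((2:ℝ) • αj) else 0) : ℝ) : ℂ)
            * (⟪αj, ξ⟫ : ℂ) * (f (sRefl αj x) - f x) := by
  have hαjR : αj ∈ R := ((hv αj).1 hαj).1
  have hne : αj ≠ 0 := fun h => hR0 (h ▸ hαjR)
  have ht : ⟪αj, x⟫ ≠ 0 := hx αj hαjR
  have h2iff : ((2:ℝ) • αj ∈ Rp) ↔ ((2:ℝ) • αj ∈ R) := by
    constructor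
    · exact fun h => ((hv _).1 h).1
    · intro h
      exact (hv _).2 ⟨h, by
        rw [real_inner_smul_left]
        have := ((hv αj).1 hαj).2
        positivity⟩
  have h1 : ⟪αj, sRefl αj ξ⟫ = -⟪αj, ξ⟫ := by
    rw [← inner_sRefl_left, sRefl_self hne, inner_neg_left]
  have h2 : ⟪αj, sRefl αj x⟫ = -⟪αj, x⟫ := by
    rw [← inner_sRefl_left, sRefl_self hne, inner_neg_left]
  have h3 : sRefl αj (sRefl αj x) = x := sRefl_sRefl hne x
  set F : 𝔞 → ℂ := fun α => ((k α * ⟪α, ξ⟫ : ℝ) : ℂ)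
      * (f (sRefl αj x) - f (sRefl αj (sRefl α x)))
      / (1 - Complex.exp (-(⟪α, x⟫ : ℝ) : ℂ)) with hF
  set G : 𝔞 → ℂ := fun α => ((k α * ⟪α, sRefl αj ξ⟫ : ℝ) : ℂ)
      * (f (sRefl αj x) - f (sRefl α (sRefl αj x)))
      / (1 - Complex.exp (-(⟪α, sRefl αj x⟫ : ℝ) : ℂ)) with hG
  have hEsub : ∀ α ∈ (Rp.erase αj).erase ((2:ℝ) • αj), α ∈ R := fun α hα =>
    ((hv α).1 (Finset.mem_erase.1 (Finset.mem_erase.1 hα).2).2).1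
  rw [sum_Rp_split Rp αj hαj hne F, sum_Rp_split Rp αj hαj hne G,
    sum_reindex hne hsimple (F := G)]
  -- E sums agree termwise
  have eE : ∑ α ∈ (Rp.erase αj).erase ((2:ℝ) • αj), G (sRefl αj α)
      = ∑ α ∈ (Rp.erase αj).erase ((2:ℝ) • αj), F α := by
    refine Finset.sum_congr rfl (fun α hα => ?_)
    rw [hG, hF]
    simp only
    rw [hk αj hαjR α (hEsub α hα), inner_sRefl_sRefl hne, inner_sRefl_sRefl hne,
      ← sRefl_conj hne]
  rw [eE]
  -- the αj terms
  have eAj : F αj = G αj + ((k αj : ℝ) : ℂ) * (⟪αj, ξ⟫ : ℂ) * (f (sRefl αj x) - f x) := by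
    rw [hF, hG]
    simp only
    rw [h3, h1, h2]
    rw [exp_frac_identity' ht (((k αj * ⟪αj, ξ⟫ : ℝ) : ℂ) * (f (sRefl αj x) - f x))]
    push_cast
    ring
  -- the 2αj terms
  have eA2 : (if (2:ℝ) • αj ∈ Rp then F ((2:ℝ) • αj) else 0)
      = (if (2:ℝ) • αj ∈ Rp then G ((2:ℝ) • αj) else 0)
        + ((2 * (if (2:ℝ) • αj ∈ R then k ((2:ℝ) • αj) else 0) : ℝ) : ℂ)
            * (⟪αj, ξ⟫ : ℂ) * (f (sRefl αj x) - f x) := by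
    simp only [h2iff]
    by_cases hm : (2:ℝ) • αj ∈ R
    · rw [if_pos hm, if_pos hm, if_pos hm, hF, hG]
      simp only
      have ht2 : ⟪(2:ℝ) • αj, x⟫ ≠ 0 := hx _ hm
      have hs2 : ∀ z : 𝔞, sRefl ((2:ℝ) • αj) z = sRefl αj z :=
        fun z => sRefl_smul_left two_ne_zero αj z hne
      rw [hs2, hs2, h3]
      rw [real_inner_smul_left, real_inner_smul_left, real_inner_smul_left, real_inner_smul_left, h1, h2]
      rw [show (2 * -⟪αj, x⟫ : ℝ) = -((2 * ⟪αj, x⟫ : ℝ)) by ring]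
      rw [exp_frac_identity' (by simpa [real_inner_smul_left] using ht2)
        (((k ((2:ℝ) • αj) * (2 * ⟪αj, ξ⟫) : ℝ) : ℂ) * (f (sRefl αj x) - f x))]
      push_cast
      ring
    · rw [if_neg hm, if_neg hm, if_neg hm]
      push_cast
      ring
  rw [eAj, eA2]
  push_cast
  ring


lemma cherednik_comp_sRefl
    (hR0 : (0:𝔞) ∉ R)
    (hv : ∀ α : 𝔞, α ∈ Rp ↔ α ∈ R ∧ 0 < ⟪α, v⟫)
    (hk : ∀ α ∈ R, ∀ β ∈ R, k (sRefl α β) = k β)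
    (hαj : αj ∈ Rp)
    (hsimple : ((Rp.erase αj).erase ((2:ℝ) • αj)).image (sRefl αj)
      = (Rp.erase αj).erase ((2:ℝ) • αj))
    (f : 𝔞 → ℂ) (hf : Differentiable ℝ f) (ξ x : 𝔞) (hx : IsRegularPt R x) :
    cherednik Rp k ξ (fun y => f (sRefl αj y)) x
      = cherednik Rp k (sRefl αj ξ) f (sRefl αj x)
        - ((k αj + 2 * (if (2:ℝ) • αj ∈ R then k ((2:ℝ) • αj) else 0) : ℝ) : ℂ)
            * (⟪αj, ξ⟫ : ℂ) * f x := by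
  unfold cherednik
  rw [fderiv_comp_sRefl f hf αj x ξ]
  rw [show ∑ α ∈ Rp, ((k α * ⟪α, ξ⟫ : ℝ) : ℂ)
        * ((fun y => f (sRefl αj y)) x - (fun y => f (sRefl αj y)) (sRefl α x))
        / (1 - Complex.exp (-(⟪α, x⟫ : ℝ) : ℂ))
      = ∑ α ∈ Rp, ((k α * ⟪α, ξ⟫ : ℝ) : ℂ)
        * (f (sRefl αj x) - f (sRefl αj (sRefl α x)))
        / (1 - Complex.exp (-(⟪α, x⟫ : ℝ) : ℂ)) from rfl]
  rw [sum_cherednik_sRefl hR0 hv hk hαj hsimple f ξ x hx]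
  rw [rho_inner_sRefl hR0 hv hk hαj hsimple ξ]
  push_cast
  ring

end Main


/-- Recurrence for eigenfunctions of the Cherednik operators under a
simple reflection `s_j`: if `D_ξ f = ⟨λ,ξ⟩ f` and `⟨λ, α_j^∨⟩ ≠ 0`, then
`g = f ∘ s_j + (k_j/⟨λ, α_j^∨⟩) f` satisfies `D_ξ g = ⟨s_j λ, ξ⟩ g`. -/
theorem cherednik_simple_root_eigen_recurrence [DecidableEq 𝔞]
    (R : Finset 𝔞) (hR : IsIntegralRootSystem R)
    (Rp : Finset 𝔞) (hRp : IsPositiveSystem R Rp)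
    (k : 𝔞 → ℝ) (hk : ∀ α ∈ R, ∀ β ∈ R, k (sRefl α β) = k β)
    (αj : 𝔞) (hαj : αj ∈ Rp)
    (hhalf : ((1:ℝ)/2) • αj ∉ R)
    (hsimple : ((Rp.erase αj).erase ((2:ℝ) • αj)).image (sRefl αj)
      = (Rp.erase αj).erase ((2:ℝ) • αj))
    (lamRe lamIm : 𝔞) (hlam : pairC lamRe lamIm (coroot αj) ≠ 0)
    (f : 𝔞 → ℂ) (hf : ContDiff ℝ 1 f)
    (heig : ∀ ξ x : 𝔞, IsRegularPt R x →
      cherednik Rp k ξ f x = pairC lamRe lamIm ξ * f x) :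
    ∀ ξ x : 𝔞, IsRegularPt R x →
      cherednik Rp k ξ
          (fun y => f (sRefl αj y)
            + (((k αj + 2 * (if (2:ℝ) • αj ∈ R then k ((2:ℝ) • αj) else 0) : ℝ) : ℂ)
                / pairC lamRe lamIm (coroot αj)) * f y) x
        = (pairC lamRe lamIm ξ - pairC lamRe lamIm (coroot αj) * (⟪αj, ξ⟫ : ℂ))
          * (f (sRefl αj x)
            + (((k αj + 2 * (if (2:ℝ) • αj ∈ R then k ((2:ℝ) • αj) else 0) : ℝ) : ℂ)
                / pairC lamRe lamIm (coroot αj)) * f x) := by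
  obtain ⟨hR0, _, hRcl⟩ := hR
  obtain ⟨v, _, hv⟩ := hRp
  intro ξ x hx
  have hαjR : αj ∈ R := ((hv αj).1 hαj).1
  have hne : αj ≠ 0 := fun h => hR0 (h ▸ hαjR)
  have hfd : Differentiable ℝ f := hf.differentiable one_ne_zero
  have hcomp : DifferentiableAt ℝ (fun y => f (sRefl αj y)) x := by
    have : (fun y => f (sRefl αj y)) = f ∘ (sReflL αj) := by
      funext y; simp [sReflL_apply]
    rw [this]
    exact ((hfd (sReflL αj x)).comp x (sReflL αj).differentiableAt)
  rw [cherednik_add_mul Rp k ξ (fun y => f (sRefl αj y)) f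
      (((k αj + 2 * (if (2:ℝ) • αj ∈ R then k ((2:ℝ) • αj) else 0) : ℝ) : ℂ)
        / pairC lamRe lamIm (coroot αj)) x hcomp (hfd x)]
  rw [cherednik_comp_sRefl hR0 hv hk hαj hsimple f hfd ξ x hx]
  have hsx_reg : IsRegularPt R (sRefl αj x) := by
    intro α hα
    rw [← inner_sRefl_left]
    exact hx _ (hRcl αj hαjR α hα)
  rw [heig (sRefl αj ξ) (sRefl αj x) hsx_reg, heig ξ x hx]
  rw [pairC_sRefl lamRe lamIm αj ξ]
  field_simp
  ring
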